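/- arXiv:1502.01774 — 5 statements merged into one kernel-verified Lean document; each statement's English description precedes it below -/
import Mathlib

section
/- The product of pseudo-differential operators defined by the generalized Leibniz rule AB = Σ_k Σ_j Σ_{l≥0} C(k,l) f_k (∂^l g_j) ∂^{k+j-l} is associative. -/
/-- Generalized binomial coefficient `C(k,l) = k(k-1)⋯(k-l+1)/l!` for `k : ℤ`. -/
noncomputable def genBinom (k : ℤ) (l : ℕ) : ℚ :=
  (∏ i ∈ Finset.range l, ((k : ℚ) - (i : ℚ))) / (Nat.factorial l : ℚ)

/-- Product of pseudo-differential operators, given by coefficient sequences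
`A, B : ℤ → R` over a differential ring `(R, d)`, determined by the generalized
Leibniz rule: `(AB)_m = Σ_k Σ_l C(k,l) A_k d^l B_{m-k+l}`. -/
noncomputable def pdoMul {R : Type*} [CommRing R] [Algebra ℚ R] (d : R → R)
    (A B : ℤ → R) : ℤ → R :=
  fun m => ∑ᶠ (k : ℤ) (l : ℕ), genBinom k l • (A k * d^[l] (B (m - k + l)))

/-!
Because the coefficients vanish above the orders, the coefficient of a product of operators of
orders `m_A, m_B` at order `m_A + m_B - n` is a finite sum over `i + l + j = n`. Expanding `(AB)C`
and `A(BC)` at order `m₁ + m₂ + m₃ - n` in this way (for `A(BC)` also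
splitting `∂^l (B ∂^s C)` by the Leibniz rule) writes both as combinations of the terms
`A_{m₁-i} ∂^p(B_{m₂-j}) ∂^q(C_{m₃-k})` over `i + p + j + q + k = n`. With `K = m₁ - i` and
`J = m₂ - j`, the two coefficients agree by Chu–Vandermonde:
`C(K,p) C(K+J-p,q) = Σ_{r+s=q} C(K,p+r) C(p+r,p) C(J,s)`.
-/

open Finset

theorem genBinom_eq_choose (k : ℤ) (l : ℕ) : genBinom k l = Ring.choose (k : ℚ) l := by
  rw [Ring.choose_eq_smul, ← Polynomial.aeval_eq_smeval, Polynomial.aeval_def,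
    ← Polynomial.eval_map, descPochhammer_map, descPochhammer_eval_eq_prod_range, genBinom,
    smul_eq_mul, div_eq_inv_mul]

theorem genBinom_mul_genBinom (K J : ℤ) (p q : ℕ) :
    genBinom K p * genBinom (K + J - p) q =
      ∑ rs ∈ antidiagonal q, genBinom K (p + rs.1) * (p + rs.1).choose p * genBinom J rs.2 := by
  have hcast : ((K + J - p : ℤ) : ℚ) = ((K : ℚ) - p) + J := by push_cast; ring
  rw [genBinom_eq_choose, genBinom_eq_choose, hcast,
    Ring.add_choose_eq q (Commute.all ((K : ℚ) - p) (J : ℚ)), mul_sum]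
  refine sum_congr rfl fun rs _ => ?_
  have h := Ring.choose_smul_choose (K : ℚ) (Nat.le_add_right p rs.1)
  rw [Nat.add_sub_cancel_left, nsmul_eq_mul] at h
  rw [genBinom_eq_choose, genBinom_eq_choose, ← mul_assoc, ← h, mul_comm (Ring.choose _ _)]

namespace Derivation

variable {A R : Type*} [CommSemiring A] [CommSemiring R] [Algebra A R] (D : Derivation A R R)

theorem iterate_map_sum {ι : Type*} (n : ℕ) (s : Finset ι) (f : ι → R) :
    D^[n] (∑ i ∈ s, f i) = ∑ i ∈ s, D^[n] (f i) := by
  rw [← coeFn_coe, ← Module.End.coe_pow, map_sum]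

theorem iterate_map_smul (n : ℕ) (a : A) (x : R) : D^[n] (a • x) = a • D^[n] x := by
  rw [← coeFn_coe, ← Module.End.coe_pow]
  exact LinearMap.map_smul _ a x

theorem iterate_leibniz (n : ℕ) (a b : R) :
    D^[n] (a * b) = ∑ ij ∈ antidiagonal n, n.choose ij.1 • (D^[ij.1] a * D^[ij.2] b) := by
  induction n with
  | zero => simp
  | succ n ih =>
    rw [sum_antidiagonal_choose_succ_nsmul (fun i j => D^[i] a * D^[j] b) n]
    simp only [Function.iterate_succ_apply', ih, map_sum, map_nsmul, leibniz, smul_eq_mul,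
      smul_add, sum_add_distrib]
    refine congrArg _ (sum_congr rfl fun ij hij => ?_)
    rw [n.choose_symm_of_eq_add (mem_antidiagonal.1 hij).symm, mul_comm]

end Derivation

section Truncated

variable {R : Type*} [CommRing R] [Algebra ℚ R] {d : R → R} {A B : ℤ → R} {mA mB : ℤ}

theorem pdoMul_eq_zero_of_lt (hd : d 0 = 0) (hA : ∀ k, mA < k → A k = 0)
    (hB : ∀ k, mB < k → B k = 0) {m : ℤ} (hm : mA + mB < m) : pdoMul d A B m = 0 := by
  refine finsum_eq_zero_of_forall_eq_zero fun k => finsum_eq_zero_of_forall_eq_zero fun l => ?_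
  rcases le_or_gt k mA with hk | hk
  · rw [hB _ (by omega), Function.iterate_fixed hd, mul_zero, smul_zero]
  · rw [hA k hk, zero_mul, smul_zero]

theorem pdoMul_add_sub_natCast (hd : d 0 = 0) (hA : ∀ k, mA < k → A k = 0)
    (hB : ∀ k, mB < k → B k = 0) (n : ℕ) :
    pdoMul d A B (mA + mB - n) = ∑ x ∈ antidiagonal n, ∑ y ∈ antidiagonal x.2,
      genBinom (mA - x.1) y.1 • (A (mA - x.1) * d^[y.1] (B (mB - y.2))) := by
  set F : ℤ → ℕ → R := fun k l => genBinom k l • (A k * d^[l] (B (mA + mB - n - k + l)))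
  have hF : ∀ k l, F k l ≠ 0 → k ≤ mA ∧ mA + mB - n - k + l ≤ mB := by
    intro k l h
    by_contra hc
    rcases le_or_gt k mA with hk | hk
    · exact h (by simp only [F]; rw [hB _ (by omega), Function.iterate_fixed hd, mul_zero,
        smul_zero])
    · exact h (by simp only [F]; rw [hA k hk, zero_mul, smul_zero])
  have hrow (i : ℕ) : ∑ᶠ l, F (mA - i) l = ∑ l ∈ range (n - i + 1), F (mA - i) l := by
    refine finsum_eq_sum_of_support_subset _ fun l hl => ?_
    have := hF _ _ hl
    simp only [coe_range, Set.mem_Iio]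
    omega
  have hcol : ∑ᶠ k, ∑ᶠ l, F k l = ∑ i ∈ range (n + 1), ∑ᶠ l, F (mA - i) l := by
    rw [← sum_image (f := fun k => ∑ᶠ l, F k l) (g := fun i : ℕ => mA - i)
      (fun a _ b _ h => by simp only at h; omega)]
    refine finsum_eq_sum_of_support_subset _ fun k hk => ?_
    obtain ⟨l, hl⟩ : ∃ l, F k l ≠ 0 := by
      by_contra! h
      exact hk (finsum_eq_zero_of_forall_eq_zero h)
    have := hF _ _ hl
    simp only [coe_image, coe_range, Set.mem_image, Set.mem_Iio]
    exact ⟨(mA - k).toNat, by omega, by omega⟩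
  rw [pdoMul, hcol, Nat.sum_antidiagonal_eq_sum_range_succ_mk]
  refine sum_congr rfl fun i hi => ?_
  rw [hrow, Nat.sum_antidiagonal_eq_sum_range_succ_mk]
  refine sum_congr rfl fun l hl => ?_
  simp only [mem_range] at hi hl
  simp only [F]
  congr 4
  omega

end Truncated

section Triple

variable {R : Type*} [CommRing R] [Algebra ℚ R]

/-- The coefficient of order `m₁ + m₂ + m₃ - n` of `ABC`: the summand indexed by
`i + p + j + q + k = n` is `C(m₁-i,p) C(m₁-i+m₂-j-p,q) A_{m₁-i} ∂^p(B_{m₂-j}) ∂^q(C_{m₃-k})`. -/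
noncomputable def pdoTriple (d : R → R) (A B C : ℤ → R) (m₁ m₂ m₃ : ℤ) (n : ℕ) : R :=
  ∑ x ∈ antidiagonal n, ∑ y ∈ antidiagonal x.2, ∑ z ∈ antidiagonal y.2, ∑ w ∈ antidiagonal z.2,
    (genBinom (m₁ - x.1) y.1 * genBinom (m₁ - x.1 + (m₂ - z.1) - y.1) w.1) •
      (A (m₁ - x.1) * (d^[y.1] (B (m₂ - z.1)) * d^[w.1] (C (m₃ - w.2))))

theorem pdoMul_pdoMul_left_eq_pdoTriple {d : R → R} (hd : d 0 = 0) {A B C : ℤ → R}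
    {m₁ m₂ m₃ : ℤ} (hA : ∀ k, m₁ < k → A k = 0) (hB : ∀ k, m₂ < k → B k = 0)
    (hC : ∀ k, m₃ < k → C k = 0) (n : ℕ) :
    pdoMul d (pdoMul d A B) C (m₁ + m₂ + m₃ - n) = pdoTriple d A B C m₁ m₂ m₃ n := by
  rw [pdoMul_add_sub_natCast hd (fun k hk => pdoMul_eq_zero_of_lt hd hA hB hk) hC]
  simp only [pdoMul_add_sub_natCast hd hA hB, sum_mul, smul_sum, smul_mul_assoc, smul_smul,
    mul_assoc, pdoTriple, sum_sigma']
  refine sum_nbij' (fun ⟨x, y, u, v⟩ => ⟨(u.1, u.2 + x.2), (v.1, v.2 + x.2), (v.2, x.2), y⟩)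
    (fun ⟨x, y, z, w⟩ => ⟨(x.1 + y.1 + z.1, z.2), w, (x.1, y.1 + z.1), (y.1, z.1)⟩)
    ?_ ?_ ?_ ?_ ?_ <;>
  rintro ⟨⟨x₁, x₂⟩, ⟨y₁, y₂⟩, ⟨z₁, z₂⟩, ⟨w₁, w₂⟩⟩ h <;>
  simp only [mem_sigma, HasAntidiagonal.mem_antidiagonal, and_true, true_and] at h ⊢ <;>
  obtain ⟨rfl, rfl, rfl, rfl⟩ := h
  · omega
  · omega
  · simp only [add_assoc]
  · simp only [add_assoc]
  · rw [mul_comm]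
    congr 3
    push_cast
    ring

theorem pdoMul_pdoMul_right_eq_pdoTriple (d : Derivation ℚ R R) {A B C : ℤ → R}
    {m₁ m₂ m₃ : ℤ} (hA : ∀ k, m₁ < k → A k = 0) (hB : ∀ k, m₂ < k → B k = 0)
    (hC : ∀ k, m₃ < k → C k = 0) (n : ℕ) :
    pdoMul d A (pdoMul d B C) (m₁ + m₂ + m₃ - n) = pdoTriple d A B C m₁ m₂ m₃ n := by
  rw [add_assoc m₁,
    pdoMul_add_sub_natCast d.map_zero hA (fun k hk => pdoMul_eq_zero_of_lt d.map_zero hB hC hk)]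
  simp only [pdoMul_add_sub_natCast d.map_zero hB hC, d.iterate_map_sum, d.iterate_map_smul,
    d.iterate_leibniz, ← Nat.cast_smul_eq_nsmul ℚ, ← Function.iterate_add_apply, mul_sum,
    smul_sum, mul_smul_comm, smul_smul, pdoTriple, genBinom_mul_genBinom, sum_smul]
  simp only [sum_sigma']
  -- `(i, l, j, s, k)` with the Leibniz split `l = p + r` ↔ `(i, p, j, q, k)` with the
  -- Vandermonde split `q = r + s`
  refine sum_nbij'
    (fun ⟨x, y, u, v, z⟩ => ⟨x, (z.1, z.2 + y.2), (u.1, z.2 + u.2), (z.2 + v.1, v.2), (z.2, v.1)⟩)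
    (fun ⟨x, y, z, w, t⟩ =>
      ⟨x, (y.1 + t.1, z.1 + t.2 + w.2), (z.1, t.2 + w.2), (t.2, w.2), (y.1, t.1)⟩)
    ?_ ?_ ?_ ?_ ?_ <;>
  rintro ⟨⟨x₁, x₂⟩, ⟨y₁, y₂⟩, ⟨z₁, z₂⟩, ⟨w₁, w₂⟩, ⟨t₁, t₂⟩⟩ h <;>
  simp only [mem_sigma, HasAntidiagonal.mem_antidiagonal, and_true] at h ⊢ <;>
  obtain ⟨rfl, rfl, rfl, rfl, rfl⟩ := h
  · omega
  · omega
  · simp only [add_assoc]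
  · simp only [Sigma.mk.injEq, Prod.mk.injEq, heq_eq_eq, true_and, and_true]
    omega
  · congr 1
    ring

end Triple

/-- the product of pseudo-differential operators
(formal series `Σ_{k≤m} f_k ∂^k`) defined by the generalized Leibniz rule is
associative. -/
theorem pdoMul_assoc
    {R : Type*} [CommRing R] [Algebra ℚ R] (d : Derivation ℚ R R)
    (A B C : ℤ → R) (m₁ m₂ m₃ : ℤ)
    (hA : ∀ k : ℤ, m₁ < k → A k = 0) (hB : ∀ k : ℤ, m₂ < k → B k = 0)
    (hC : ∀ k : ℤ, m₃ < k → C k = 0) :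
    pdoMul (⇑d) (pdoMul (⇑d) A B) C = pdoMul (⇑d) A (pdoMul (⇑d) B C) := by
  funext m
  rcases lt_or_ge (m₁ + m₂ + m₃) m with hm | hm
  · have hAB : ∀ k, m₁ + m₂ < k → pdoMul d A B k = 0 :=
      fun _ => pdoMul_eq_zero_of_lt d.map_zero hA hB
    have hBC : ∀ k, m₂ + m₃ < k → pdoMul d B C k = 0 :=
      fun _ => pdoMul_eq_zero_of_lt d.map_zero hB hC
    rw [pdoMul_eq_zero_of_lt d.map_zero hAB hC hm,
      pdoMul_eq_zero_of_lt d.map_zero hA hBC (by linarith)]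
  · obtain ⟨n, rfl⟩ : ∃ n : ℕ, m = m₁ + m₂ + m₃ - n := ⟨(m₁ + m₂ + m₃ - m).toNat, by omega⟩
    rw [pdoMul_pdoMul_left_eq_pdoTriple d.map_zero hA hB hC,
      pdoMul_pdoMul_right_eq_pdoTriple d hA hB hC]
end

section
/- Let w be a smooth function and define coefficients b_k by b₁ = 1, b₂ = 0, and b_{k+1} = -ε(k-1) b_{k-1} w_x - ε ∂_x b_k for k ≥ 2. Then the formal series Σ_{k≥1} b_k/(p-w)^k is the symbol of the inverse (D-w)^{-1} of D - w, where D = ε∂, i.e. the star product of the symbol (p - w) with Σ_{k≥1} b_k/(p-w)^k equals 1. -/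
open scoped ContDiff

lemma bvanish (w : ℝ → ℝ) (b : ℕ → ℕ → ℝ → ℝ)
    (hb2 : ∀ m : ℕ, b 2 m = 0)
    (hrec0 : ∀ k : ℕ, 2 ≤ k → b (k + 1) 0 = 0)
    (hrec : ∀ k : ℕ, 2 ≤ k → ∀ m : ℕ, b (k + 1) (m + 1) =
      fun x => -((k : ℝ) - 1) * b (k - 1) m x * deriv w x - deriv (b k m) x) :
    ∀ k m : ℕ, 2 * m + 2 ≤ k → b k m = 0 := by
  intro k
  induction k using Nat.strong_induction_on with
  | _ k ih =>
    match k with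
    | 0 => intro m hm; omega
    | 1 => intro m hm; omega
    | 2 => intro m hm; have : m = 0 := by omega
           subst this; exact hb2 0
    | (k+3) =>
      intro m hm
      cases m with
      | zero => exact hrec0 (k+2) (by omega)
      | succ m' =>
        have h1 : b (k+1) m' = 0 := ih (k+1) (by omega) m' (by omega)
        have h2 : b (k+2) m' = 0 := ih (k+2) (by omega) m' (by omega)
        have := hrec (k+2) (by omega) m'
        simp only [show k+2+1 = k+3 from rfl, show k+2-1 = k+1 from rfl] at this
        rw [this]
        funext y
        simp [h1, h2, Pi.zero_def]

lemma bsmooth (w : ℝ → ℝ) (hw : ContDiff ℝ ∞ w) (b : ℕ → ℕ → ℝ → ℝ)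
    (hb10 : b 1 0 = fun _ => 1)
    (hb1 : ∀ m : ℕ, 1 ≤ m → b 1 m = 0)
    (hb2 : ∀ m : ℕ, b 2 m = 0)
    (hrec0 : ∀ k : ℕ, 2 ≤ k → b (k + 1) 0 = 0)
    (hrec : ∀ k : ℕ, 2 ≤ k → ∀ m : ℕ, b (k + 1) (m + 1) =
      fun x => -((k : ℝ) - 1) * b (k - 1) m x * deriv w x - deriv (b k m) x) :
    ∀ k m : ℕ, ContDiff ℝ ∞ (b (k + 1) m) := by
  have hw' : ContDiff ℝ ∞ (deriv w) := (contDiff_infty_iff_deriv.mp hw).2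
  intro k
  induction k using Nat.strong_induction_on with
  | _ k ih =>
    match k with
    | 0 =>
      intro m
      cases m with
      | zero => rw [hb10]; exact contDiff_const
      | succ m' => rw [hb1 (m'+1) (by omega)]; exact contDiff_const
    | 1 => intro m; rw [hb2 m]; exact contDiff_const
    | (k+2) =>
      intro m
      cases m with
      | zero => rw [hrec0 (k+2) (by omega)]; exact contDiff_const
      | succ m' =>
        have h1 : ContDiff ℝ ∞ (b (k+1) m') := ih k (by omega) m'
        have h2 : ContDiff ℝ ∞ (deriv (b (k+2) m')) :=
          (contDiff_infty_iff_deriv.mp (ih (k+1) (by omega) m')).2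
        have := hrec (k+2) (by omega) m'
        simp only [show k+2+1 = k+3 from rfl, show k+2-1 = k+1 from rfl] at this
        rw [this]
        exact ((contDiff_const.mul h1).mul hw').sub h2

lemma itder_zero_fun : ∀ n : ℕ, iteratedDeriv n (fun _ : ℝ => (0:ℝ)) = fun _ => 0 := by
  intro n
  induction n with
  | zero => rw [iteratedDeriv_zero]
  | succ n ih => rw [iteratedDeriv_succ',
      show deriv (fun _ : ℝ => (0:ℝ)) = fun _ => (0:ℝ) from funext fun q => deriv_const q 0, ih]

lemma itder_id_sub_const (c : ℝ) :
    ∀ k : ℕ, 2 ≤ k → iteratedDeriv k (fun q : ℝ => q - c) = fun _ => 0 := by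
  intro k hk
  obtain ⟨n, rfl⟩ : ∃ n, k = n + 2 := ⟨k - 2, by omega⟩
  rw [iteratedDeriv_succ',
    show deriv (fun q : ℝ => q - c) = fun _ => (1:ℝ) by funext q; simp,
    iteratedDeriv_succ',
    show deriv (fun _ : ℝ => (1:ℝ)) = fun _ => (0:ℝ) from funext fun q => deriv_const q 1,
    itder_zero_fun]

/-- let `w` be a smooth function and define the coefficients `b_k`
(formal power series in `ε`, recorded by their `ε`-coefficients `b k m`, so that
`b_k = Σ_m b k m · ε^m`) by `b₁ = 1`, `b₂ = 0` and
`b_{k+1} = -ε (k-1) b_{k-1} w_x - ε ∂_x b_k` for `k ≥ 2`.  Then the formal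
series `Σ_{k≥1} b_k/(p-w)^k` is the symbol of `(D-w)^{-1}`, `D = ε∂`:
the star product `(p - w) ⋆ Σ_{k≥1} b_k/(p-w)^k`, whose `ε^m`-coefficient is
`Σ_{k≤m} (1/k!) ∂_p^k (p - w) · ∂_x^k [ε^{m-k}-coefficient of the series]`,
equals `1`. -/
theorem symbol_inverse_of_D_sub_w
    (w : ℝ → ℝ) (hw : ContDiff ℝ (⊤ : ℕ∞) w)
    (b : ℕ → ℕ → ℝ → ℝ)
    (hb10 : b 1 0 = fun _ => 1)
    (hb1 : ∀ m : ℕ, 1 ≤ m → b 1 m = 0)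
    (hb2 : ∀ m : ℕ, b 2 m = 0)
    (hrec0 : ∀ k : ℕ, 2 ≤ k → b (k + 1) 0 = 0)
    (hrec : ∀ k : ℕ, 2 ≤ k → ∀ m : ℕ, b (k + 1) (m + 1) =
      fun x => -((k : ℝ) - 1) * b (k - 1) m x * deriv w x - deriv (b k m) x) :
    ∀ (m : ℕ) (x p : ℝ), p ≠ w x →
      (∑ k ∈ Finset.range (m + 1),
        ((Nat.factorial k : ℝ))⁻¹ *
          iteratedDeriv k (fun q => q - w x) p *
          iteratedDeriv k
            (fun y => ∑ᶠ j : ℕ, b (j + 1) (m - k) y / (p - w y) ^ (j + 1)) x)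
      = if m = 0 then 1 else 0 := by
  have hwi : ContDiff ℝ ∞ w := hw.of_le (by simp)
  have hwd : ContDiff ℝ ∞ (deriv w) := (contDiff_infty_iff_deriv.mp hwi).2
  have hsm := bsmooth w hwi b hb10 hb1 hb2 hrec0 hrec
  have hvan := bvanish w b hb2 hrec0 hrec
  intro m x p hne
  have hu : p - w x ≠ 0 := sub_ne_zero.mpr hne
  have hFeq : ∀ t : ℕ, t ≤ m →
      (fun y => ∑ᶠ j : ℕ, b (j + 1) t y / (p - w y) ^ (j + 1))
      = fun y => ∑ j ∈ Finset.range (2*m+2), b (j + 1) t y / (p - w y) ^ (j + 1) := by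
    intro t ht
    funext y
    apply finsum_eq_finset_sum_of_support_subset
    intro j hj
    simp only [Function.mem_support] at hj
    simp only [Finset.coe_range, Set.mem_Iio]
    by_contra hjN
    push_neg at hjN
    have hz : b (j+1) t = 0 := hvan (j+1) t (by omega)
    rw [hz] at hj
    simp at hj
  rcases m with _ | m₀
  · -- m = 0
    simp only [zero_add, Finset.sum_range_one, Nat.zero_sub, Nat.factorial_zero,
      Nat.cast_one, inv_one, one_mul, iteratedDeriv_zero, if_true, eq_self_iff_true]
    rw [show (∑ᶠ (j : ℕ), b (j + 1) 0 x / (p - w x) ^ (j + 1))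
        = ∑ j ∈ Finset.range (2*0+2), b (j + 1) 0 x / (p - w x) ^ (j + 1)
      from congrFun (hFeq 0 le_rfl) x]
    norm_num [Finset.sum_range_succ, hb10, hb2]
    field_simp
  · -- m = m₀ + 1
    simp only [Nat.succ_ne_zero, if_neg]
    rw [← Finset.sum_subset (Finset.range_subset_range.mpr (by omega : 2 ≤ m₀ + 1 + 1))
      (fun k hk hk2 => by
        have h2k : 2 ≤ k := by simp only [Finset.mem_range] at hk2; omega
        rw [itder_id_sub_const (w x) k h2k]
        simp)]
    rw [Finset.sum_range_succ, Finset.sum_range_one]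
    simp only [Nat.factorial_zero, Nat.factorial_one, Nat.cast_one, inv_one, one_mul,
      iteratedDeriv_zero, iteratedDeriv_one, Nat.sub_zero, Nat.add_sub_cancel, if_false,
      deriv_sub_const, deriv_id'']
    rw [show (∑ᶠ (j : ℕ), b (j + 1) (m₀ + 1) x / (p - w x) ^ (j + 1))
        = ∑ j ∈ Finset.range (2*(m₀+1)+2), b (j + 1) (m₀+1) x / (p - w x) ^ (j + 1)
      from congrFun (hFeq (m₀+1) le_rfl) x]
    rw [hFeq m₀ (by omega)]
    have hwdiff : DifferentiableAt ℝ w x := (hwi.differentiable (by norm_num)).differentiableAt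
    have hgdiff : ∀ n : ℕ, DifferentiableAt ℝ (fun y => (p - w y) ^ n) x :=
      fun n => ((differentiableAt_const p).sub hwdiff).pow n
    have hbdiff : ∀ j t : ℕ, DifferentiableAt ℝ (b (j + 1) t) x :=
      fun j t => ((hsm j t).differentiable (by norm_num)).differentiableAt
    have hterm : ∀ j : ℕ, DifferentiableAt ℝ (fun y => b (j + 1) m₀ y / (p - w y) ^ (j + 1)) x :=
      fun j => (hbdiff j m₀).div (hgdiff (j + 1)) (pow_ne_zero _ hu)
    rw [deriv_fun_sum (fun j _ => hterm j)]
    have hdterm : ∀ j : ℕ, deriv (fun y => b (j + 1) m₀ y / (p - w y) ^ (j + 1)) x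
        = deriv (b (j + 1) m₀) x / (p - w x) ^ (j + 1)
          + ((j : ℝ) + 1) * b (j + 1) m₀ x * deriv w x / (p - w x) ^ (j + 2) := by
      intro j
      rw [show (fun y => b (j + 1) m₀ y / (p - w y) ^ (j + 1))
            = fun y => b (j + 1) m₀ y / (fun z => (p - w z) ^ (j + 1)) y from rfl,
        deriv_fun_div (hbdiff j m₀) (hgdiff (j + 1)) (pow_ne_zero _ hu),
        deriv_fun_pow (f := fun y => p - w y) ((differentiableAt_const p).sub hwdiff) (j + 1),
        deriv_const_sub]
      simp only [Nat.add_sub_cancel]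
      field_simp
      push_cast
      ring
    rw [Finset.sum_congr rfl (fun j _ => hdterm j)]
    have hC0 : b 1 (m₀ + 1) x = 0 := by rw [hb1 (m₀ + 1) (by omega)]; rfl
    have hC1 : b 2 (m₀ + 1) x = 0 := by rw [hb2]; rfl
    have hD0 : deriv (b 1 m₀) x = 0 := by
      cases m₀ with
      | zero => rw [hb10]; exact deriv_const x 1
      | succ n => rw [hb1 _ (by omega)]; exact deriv_const x 0
    have hBK : b (2 * m₀ + 3) m₀ x = 0 := by rw [hvan _ _ (by omega)]; rfl
    have hBK1 : b (2 * m₀ + 4) m₀ x = 0 := by rw [hvan _ _ (by omega)]; rfl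
    have hDK : deriv (b (2 * m₀ + 4) m₀) x = 0 := by
      rw [hvan _ _ (by omega : 2 * m₀ + 2 ≤ 2 * m₀ + 4)]; exact deriv_const x 0
    have e1 : (p - w x) * ∑ j ∈ Finset.range (2 * (m₀ + 1) + 2),
          b (j + 1) (m₀ + 1) x / (p - w x) ^ (j + 1)
        = -∑ j ∈ Finset.range (2 * m₀ + 2),
            (deriv (b (j + 2) m₀) x / (p - w x) ^ (j + 2)
              + ((j : ℝ) + 1) * b (j + 1) m₀ x * deriv w x / (p - w x) ^ (j + 2)) := by
      rw [Finset.mul_sum]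
      rw [Finset.sum_congr rfl (fun j _ =>
        show (p - w x) * (b (j + 1) (m₀ + 1) x / (p - w x) ^ (j + 1))
          = b (j + 1) (m₀ + 1) x / (p - w x) ^ j by rw [pow_succ]; field_simp)]
      rw [show 2 * (m₀ + 1) + 2 = (2 * m₀ + 2) + 1 + 1 by ring]
      rw [Finset.sum_range_succ' _ ((2 * m₀ + 2) + 1), Finset.sum_range_succ' _ (2 * m₀ + 2)]
      simp only [pow_zero, hC0, hC1, zero_div, div_one, add_zero, zero_add, zero_add]
      rw [← Finset.sum_neg_distrib]
      apply Finset.sum_congr rfl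
      intro j _
      have hr := congrFun (hrec (j + 2) (by omega) m₀) x
      simp only [show j + 2 + 1 = j + 3 from rfl, show j + 2 - 1 = j + 1 from rfl] at hr
      rw [show j + 1 + 1 + 1 = j + 3 from rfl, show j + 1 + 1 = j + 2 from rfl, hr]
      push_cast
      ring
    have e2 : ∑ j ∈ Finset.range (2 * (m₀ + 1) + 2),
          (deriv (b (j + 1) m₀) x / (p - w x) ^ (j + 1)
            + ((j : ℝ) + 1) * b (j + 1) m₀ x * deriv w x / (p - w x) ^ (j + 2))
        = ∑ j ∈ Finset.range (2 * m₀ + 2),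
            (deriv (b (j + 2) m₀) x / (p - w x) ^ (j + 2)
              + ((j : ℝ) + 1) * b (j + 1) m₀ x * deriv w x / (p - w x) ^ (j + 2)) := by
      rw [Finset.sum_add_distrib, Finset.sum_add_distrib]
      congr 1
      · rw [show 2 * (m₀ + 1) + 2 = (2 * m₀ + 3) + 1 by ring,
          Finset.sum_range_succ' _ (2 * m₀ + 3)]
        rw [Finset.sum_range_succ]
        simp only [hD0, zero_div, add_zero]
        rw [show 2 * m₀ + 2 + 1 + 1 = 2 * m₀ + 4 from rfl, hDK]
        simp only [zero_div, add_zero]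
      · rw [show 2 * (m₀ + 1) + 2 = (2 * m₀ + 2) + 1 + 1 by ring,
          Finset.sum_range_succ, Finset.sum_range_succ]
        rw [show 2 * m₀ + 2 + 1 + 1 = 2 * m₀ + 4 from rfl,
          show 2 * m₀ + 2 + 1 = 2 * m₀ + 3 from rfl, hBK1, hBK]
        ring
    rw [e1, e2]
    ring
end

section
/- Let n ≥ 0 and let λ(p) = p^{n+1} + v_n p^{n-1} + ⋯ + v₂ p + v₁ + u/(p-w) with u ≠ 0, and suppose λ'(p) = 0 has n+2 pairwise distinct roots r₁,…,r_{n+2}, none equal to w. Then for each i, Σ_{k≠i} (λ(r_k) - λ(r_i))/(λ''(r_k)(r_k - r_i)²) = (1-n)/(2(n+1)). -/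
open Finset

/-- The superpotential `λ(p) = p^{n+1} + v_n p^{n-1} + ⋯ + v₂ p + v₁ + u/(p-w)`. -/
noncomputable def lam (n : ℕ) (v : ℕ → ℂ) (u w : ℂ) : ℂ → ℂ :=
  fun p => p ^ (n + 1) + (∑ i ∈ Finset.range n, v (i + 1) * p ^ i) + u / (p - w)

/-!
Write `λ = P + u/(p - w)` with `P` monic of degree `d = n + 1`. Then `λ' = Q/(p - w)²` with
`Q = P'(p - w)² - u` of degree `d + 1` and leading coefficient `d`, so the critical points are
exactly the roots of `Q` and `Q = d ∏ₖ (p - r_k)`. For a fixed `i`, the polynomial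
`H = (λ - λ(r_i))(p - w)²` is monic of degree `d + 2` with a double root at `r_i`, so
`H = (p - r_i)² F` with `F` monic of degree `d`, and the `k`-th summand is `F(r_k)/Q'(r_k)`.
By Lagrange interpolation `∑ₖ F(r_k)/Q'(r_k) = 1/d`, while the identity `(p - w)(H' - Q) = 2H`
gives `2F(r_i) = H''(r_i) = Q'(r_i)`: the missing term `k = i` is `1/2`.
-/

open Polynomial Filter Topology

section Nodes

variable {K ι : Type*} [Field K] {s : Finset ι} {v : ι → K}

theorem eq_C_leadingCoeff_mul_nodal {f : K[X]} (hvs : Set.InjOn v s) (hdeg : f.degree = #s)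
    (hf : ∀ i ∈ s, f.eval (v i) = 0) : f = C f.leadingCoeff * Lagrange.nodal s v := by
  have hlc : f.leadingCoeff ≠ 0 := by
    rw [Ne, leadingCoeff_eq_zero]
    rintro rfl
    simp at hdeg
  refine eq_of_degree_le_of_eval_index_eq s hvs hdeg.le ?_ ?_ ?_
  · rw [degree_C_mul hlc, Lagrange.degree_nodal, hdeg]
  · rw [leadingCoeff_C_mul_of_isUnit hlc.isUnit, Lagrange.nodal_monic.leadingCoeff, mul_one]
  · intro i hi
    rw [hf i hi, eval_mul, Lagrange.eval_nodal_at_node hi, mul_zero]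

variable [DecidableEq ι] {f : K[X]} (hvs : Set.InjOn v s) (hdeg : f.degree = #s)
  (hf : ∀ i ∈ s, f.eval (v i) = 0)
include hvs hdeg hf

theorem eval_derivative_eq_leadingCoeff_mul_prod {i : ι} (hi : i ∈ s) :
    (derivative f).eval (v i) = f.leadingCoeff * ∏ j ∈ s.erase i, (v i - v j) := by
  conv_lhs => rw [eq_C_leadingCoeff_mul_nodal hvs hdeg hf]
  rw [derivative_C_mul, eval_mul, eval_C, Lagrange.eval_nodal_derivative_eval_node_eq hi,
    Lagrange.eval_nodal]

theorem eval_derivative_ne_zero {i : ι} (hi : i ∈ s) : (derivative f).eval (v i) ≠ 0 := by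
  rw [eval_derivative_eq_leadingCoeff_mul_prod hvs hdeg hf hi]
  refine mul_ne_zero ?_ (prod_ne_zero_iff.mpr fun j hj => sub_ne_zero.mpr fun h => ?_)
  · rintro hlc
    rw [leadingCoeff_eq_zero.mp hlc, degree_zero] at hdeg
    exact WithBot.bot_ne_coe hdeg
  · exact (mem_erase.mp hj).1 (hvs (mem_erase.mp hj).2 hi h.symm)

theorem sum_eval_div_eval_derivative {F : K[X]} (hF : F.degree < #s) :
    ∑ i ∈ s, F.eval (v i) / (derivative f).eval (v i) = F.coeff (#s - 1) / f.leadingCoeff := by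
  rw [Lagrange.coeff_eq_sum hvs hF, sum_div]
  refine sum_congr rfl fun i hi => ?_
  rw [eval_derivative_eq_leadingCoeff_mul_prod hvs hdeg hf hi, div_div, mul_comm]

end Nodes

section DoubleRoot

variable {R : Type*} [CommRing R]

theorem exists_eq_X_sub_C_sq_mul {H : R[X]} {b : R} (hH : H ≠ 0) (h0 : H.eval b = 0)
    (h1 : (derivative H).eval b = 0) : ∃ F, H = (X - C b) ^ 2 * F :=
  (le_rootMultiplicity_iff hH).mp ((one_lt_rootMultiplicity_iff_isRoot hH).mpr ⟨h0, h1⟩)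

theorem eval_derivative_derivative_X_sub_C_sq_mul (F : R[X]) (b : R) :
    (derivative (derivative ((X - C b) ^ 2 * F))).eval b = 2 * F.eval b := by
  simp only [derivative_mul, derivative_pow, derivative_sub, derivative_X, derivative_C,
    derivative_add, sub_zero, mul_one, eval_add, eval_mul, eval_pow, eval_sub, eval_X,
    eval_C, sub_self]
  ring

end DoubleRoot

section Numerators

variable {K : Type*} [Field K]

/-- For `λ = P + u/(X - w)`, the numerator of `λ'` over `(X - w)²`. -/
noncomputable def derivNumerator (P : K[X]) (u w : K) : K[X] :=
  derivative P * (X - C w) ^ 2 - C u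

/-- For `λ = P + u/(X - w)`, the numerator of `λ - L` over `(X - w)²`. -/
noncomputable def levelNumerator (P : K[X]) (u w L : K) : K[X] :=
  (P - C L) * (X - C w) ^ 2 + C u * (X - C w)

theorem eval_levelNumerator (P : K[X]) (u L : K) {w p : K} (hp : p ≠ w) :
    (levelNumerator P u w L).eval p = (P.eval p + u / (p - w) - L) * (p - w) ^ 2 := by
  simp only [levelNumerator, eval_add, eval_mul, eval_pow, eval_sub, eval_X, eval_C]
  field_simp [sub_ne_zero.mpr hp]
  ring

theorem X_sub_C_mul_derivative_levelNumerator_sub (P : K[X]) (u w L : K) :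
    (X - C w) * (derivative (levelNumerator P u w L) - derivNumerator P u w) =
      2 * levelNumerator P u w L := by
  simp only [levelNumerator, derivNumerator, derivative_add, derivative_mul, derivative_sub,
    derivative_sq, derivative_X, derivative_C, C_ofNat]
  ring

section Evaluation

variable {P : K[X]} {u w L b : K} (hb : b ≠ w) (hH : (levelNumerator P u w L).eval b = 0)
  (hQ : (derivNumerator P u w).eval b = 0)
include hb hH hQ

theorem eval_derivative_levelNumerator_eq_zero :
    (derivative (levelNumerator P u w L)).eval b = 0 := by
  have h := congrArg (eval b) (X_sub_C_mul_derivative_levelNumerator_sub P u w L)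
  simp only [eval_mul, eval_sub, eval_X, eval_C, hH, hQ, mul_zero, sub_zero] at h
  exact (mul_eq_zero.mp h).resolve_left (sub_ne_zero.mpr hb)

theorem eval_derivative_derivative_levelNumerator :
    (derivative (derivative (levelNumerator P u w L))).eval b =
      (derivative (derivNumerator P u w)).eval b := by
  have h := congrArg (fun g => (derivative g).eval b)
    (X_sub_C_mul_derivative_levelNumerator_sub P u w L)
  simp only [derivative_mul, derivative_sub, derivative_X, derivative_C, sub_zero, one_mul,
    eval_add, eval_mul, eval_sub, eval_X, eval_C, hQ, hH,
    eval_derivative_levelNumerator_eq_zero hb hH hQ, mul_zero, zero_add] at h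
  exact sub_eq_zero.mp ((mul_eq_zero.mp h).resolve_left (sub_ne_zero.mpr hb))

end Evaluation

variable {P : K[X]}

theorem degree_derivative_mul_X_sub_C_sq [CharZero K] (hd : 0 < P.natDegree) (w : K) :
    (derivative P * (X - C w) ^ 2).degree = ↑(P.natDegree + 1) := by
  rw [degree_mul, degree_pow, degree_X_sub_C,
    degree_eq_natDegree (derivative_ne_zero.mpr hd.ne'), natDegree_derivative,
    show P.natDegree + 1 = P.natDegree - 1 + 2 by omega]
  rfl

theorem degree_derivNumerator [CharZero K] (hd : 0 < P.natDegree) (u w : K) :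
    (derivNumerator P u w).degree = ↑(P.natDegree + 1) := by
  have hA := degree_derivative_mul_X_sub_C_sq hd w
  rw [derivNumerator, degree_sub_C (hA ▸ WithBot.coe_pos.mpr P.natDegree.succ_pos), hA]

theorem leadingCoeff_derivNumerator [CharZero K] (hP : P.Monic) (hd : 0 < P.natDegree)
    (u w : K) : (derivNumerator P u w).leadingCoeff = P.natDegree := by
  have hlt : (C u).degree < (derivative P * (X - C w) ^ 2).degree := by
    rw [degree_derivative_mul_X_sub_C_sq hd w]
    exact degree_C_le.trans_lt (WithBot.coe_pos.mpr P.natDegree.succ_pos)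
  rw [derivNumerator, leadingCoeff_sub_of_degree_lt hlt,
    leadingCoeff_mul_monic ((monic_X_sub_C w).pow 2), leadingCoeff_derivative, hP.leadingCoeff,
    one_mul]

variable (hP : P.Monic) (hd : 0 < P.natDegree)
include hP hd

theorem monic_sub_C (L : K) : (P - C L).Monic :=
  hP.sub_of_left (degree_C_le.trans_lt (natDegree_pos_iff_degree_pos.mp hd))

theorem natDegree_sub_C_mul_X_sub_C_sq (L w : K) :
    ((P - C L) * (X - C w) ^ 2).natDegree = P.natDegree + 2 := by
  rw [(monic_sub_C hP hd L).natDegree_mul ((monic_X_sub_C w).pow 2), natDegree_sub_C,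
    natDegree_pow, natDegree_X_sub_C]

theorem degree_C_mul_X_sub_C_lt (u w L : K) :
    (C u * (X - C w)).degree < ((P - C L) * (X - C w) ^ 2).degree := by
  rw [degree_eq_natDegree ((monic_sub_C hP hd L).mul ((monic_X_sub_C w).pow 2)).ne_zero,
    natDegree_sub_C_mul_X_sub_C_sq hP hd L w]
  refine (degree_le_of_natDegree_le
    ((natDegree_C_mul_le u _).trans (natDegree_X_sub_C w).le)).trans_lt ?_
  exact_mod_cast (by omega : 1 < P.natDegree + 2)

theorem monic_levelNumerator (u w L : K) : (levelNumerator P u w L).Monic :=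
  ((monic_sub_C hP hd L).mul ((monic_X_sub_C w).pow 2)).add_of_left
    (degree_C_mul_X_sub_C_lt hP hd u w L)

theorem natDegree_levelNumerator (u w L : K) :
    (levelNumerator P u w L).natDegree = P.natDegree + 2 := by
  rw [levelNumerator, natDegree_add_eq_left_of_degree_lt (degree_C_mul_X_sub_C_lt hP hd u w L),
    natDegree_sub_C_mul_X_sub_C_sq hP hd L w]

theorem exists_levelNumerator_eq_X_sub_C_sq_mul {u w b : K} (hb : b ≠ w)
    (hQ : (derivNumerator P u w).eval b = 0) :
    ∃ F : K[X], levelNumerator P u w (P.eval b + u / (b - w)) = (X - C b) ^ 2 * F ∧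
      F.Monic ∧ F.natDegree = P.natDegree ∧
      2 * F.eval b = (derivative (derivNumerator P u w)).eval b := by
  set H := levelNumerator P u w (P.eval b + u / (b - w))
  have hH : H.eval b = 0 := by rw [eval_levelNumerator _ _ _ hb, sub_self, zero_mul]
  obtain ⟨F, hF⟩ := exists_eq_X_sub_C_sq_mul (monic_levelNumerator hP hd u w _).ne_zero hH
    (eval_derivative_levelNumerator_eq_zero hb hH hQ)
  have hsq : ((X - C b) ^ 2 : K[X]).Monic := (monic_X_sub_C b).pow 2
  have hFmon : F.Monic := hsq.of_mul_monic_left (hF ▸ monic_levelNumerator hP hd u w _)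
  refine ⟨F, hF, hFmon, ?_, ?_⟩
  · have h := natDegree_levelNumerator hP hd u w (P.eval b + u / (b - w))
    rw [hF, hsq.natDegree_mul hFmon, natDegree_pow, natDegree_X_sub_C] at h
    omega
  · rw [← eval_derivative_derivative_X_sub_C_sq_mul, ← hF]
    exact eval_derivative_derivative_levelNumerator hb hH hQ

end Numerators

section Calculus

variable {𝕜 : Type*} [NontriviallyNormedField 𝕜] (P : 𝕜[X]) (u : 𝕜) {w p : 𝕜}

theorem hasDerivAt_eval_add_div_sub (hp : p ≠ w) :
    HasDerivAt (fun x => P.eval x + u / (x - w))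
      ((derivNumerator P u w).eval p / (p - w) ^ 2) p := by
  have hpw : p - w ≠ 0 := sub_ne_zero.mpr hp
  have h := (P.hasDerivAt p).fun_add
    (((hasDerivAt_id' p).sub_const w).fun_inv hpw |>.const_mul u)
  simp only [← div_eq_mul_inv] at h
  refine h.congr_deriv ?_
  simp only [derivNumerator, eval_sub, eval_mul, eval_pow, eval_X, eval_C]
  field_simp
  ring

theorem eval_derivNumerator_eq_zero_of_deriv_eq_zero (hp : p ≠ w)
    (h : deriv (fun x => P.eval x + u / (x - w)) p = 0) : (derivNumerator P u w).eval p = 0 := by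
  rw [(hasDerivAt_eval_add_div_sub P u hp).deriv] at h
  exact (div_eq_zero_iff.mp h).resolve_right (pow_ne_zero 2 (sub_ne_zero.mpr hp))

theorem iteratedDeriv_two_eval_add_div_sub (hp : p ≠ w)
    (hQ : (derivNumerator P u w).eval p = 0) :
    iteratedDeriv 2 (fun x => P.eval x + u / (x - w)) p =
      (derivative (derivNumerator P u w)).eval p / (p - w) ^ 2 := by
  have hderiv : deriv (fun x => P.eval x + u / (x - w)) =ᶠ[𝓝 p]
      fun x => (derivNumerator P u w).eval x / (x - w) ^ 2 := by
    filter_upwards [eventually_ne_nhds hp] with x hx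
      using (hasDerivAt_eval_add_div_sub P u hx).deriv
  have h := ((derivNumerator P u w).hasDerivAt p).fun_div
    (((hasDerivAt_id' p).sub_const w).fun_pow 2) (pow_ne_zero 2 (sub_ne_zero.mpr hp))
  rw [iteratedDeriv_succ, iteratedDeriv_one, hderiv.deriv_eq, h.deriv, hQ]
  field_simp [sub_ne_zero.mpr hp]
  ring

end Calculus

section SumRule

variable {𝕜 : Type*} [NontriviallyNormedField 𝕜] {P : 𝕜[X]} {u w : 𝕜}
  {f : 𝕜 → 𝕜} (hf : f = fun x => P.eval x + u / (x - w))
include hf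

theorem div_iteratedDeriv_two_mul_sq_eq {a b : 𝕜} (ha : a ≠ w) (hab : a ≠ b)
    (hQ : (derivNumerator P u w).eval a = 0) {F : 𝕜[X]}
    (hF : levelNumerator P u w (f b) = (X - C b) ^ 2 * F) :
    (f a - f b) / (iteratedDeriv 2 f a * (a - b) ^ 2) =
      F.eval a / (derivative (derivNumerator P u w)).eval a := by
  have h := eval_levelNumerator P u (f b) ha
  rw [hF, eval_mul, eval_pow, eval_sub, eval_X, eval_C] at h
  have hfa : f a - f b = (a - b) ^ 2 * F.eval a / (a - w) ^ 2 := by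
    rw [h, hf]
    field_simp [sub_ne_zero.mpr ha]
  rw [hfa, hf, iteratedDeriv_two_eval_add_div_sub P u ha hQ]
  field_simp [sub_ne_zero.mpr ha, sub_ne_zero.mpr hab]

theorem sum_erase_div_iteratedDeriv_two_mul_sq [CharZero 𝕜] {ι : Type*} [DecidableEq ι]
    {s : Finset ι} {r : ι → 𝕜} (hP : P.Monic) (hd : 0 < P.natDegree) (hr : Set.InjOn r s)
    (hs : #s = P.natDegree + 1) (hw : ∀ k ∈ s, r k ≠ w)
    (hcrit : ∀ k ∈ s, deriv f (r k) = 0) {i : ι} (hi : i ∈ s) :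
    ∑ k ∈ s.erase i, (f (r k) - f (r i)) / (iteratedDeriv 2 f (r k) * (r k - r i) ^ 2) =
      1 / P.natDegree - 1 / 2 := by
  set Q := derivNumerator P u w
  have hQ : ∀ k ∈ s, Q.eval (r k) = 0 := fun k hk =>
    eval_derivNumerator_eq_zero_of_deriv_eq_zero P u (hw k hk) (hf ▸ hcrit k hk)
  have hQdeg : Q.degree = #s := by rw [hs]; exact degree_derivNumerator hd u w
  obtain ⟨F, hF, hFmon, hFdeg, hFi⟩ :=
    exists_levelNumerator_eq_X_sub_C_sq_mul hP hd (hw i hi) (hQ i hi)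
  have hFdeg' : F.degree < #s := by
    rw [degree_eq_natDegree hFmon.ne_zero, hFdeg, hs]
    exact_mod_cast P.natDegree.lt_succ_self
  have hsum : ∑ k ∈ s, F.eval (r k) / (derivative Q).eval (r k) = 1 / P.natDegree := by
    rw [sum_eval_div_eval_derivative hr hQdeg hQ hFdeg', leadingCoeff_derivNumerator hP hd, hs,
      Nat.add_sub_cancel, ← hFdeg, hFmon.coeff_natDegree]
  have hterm : F.eval (r i) / (derivative Q).eval (r i) = 1 / 2 := by
    have hQ' := eval_derivative_ne_zero hr hQdeg hQ hi
    rw [← hFi] at hQ' ⊢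
    rw [div_mul_eq_div_div_swap, div_self (right_ne_zero_of_mul hQ')]
  calc _ = ∑ k ∈ s.erase i, F.eval (r k) / (derivative Q).eval (r k) := by
        refine sum_congr rfl fun k hk => ?_
        obtain ⟨hki, hk⟩ := mem_erase.mp hk
        exact div_iteratedDeriv_two_mul_sq_eq hf (hw k hk) (fun h => hki (hr hk hi h))
          (hQ k hk) (by rw [hf]; exact hF)
    _ = 1 / P.natDegree - 1 / 2 := by rw [← hsum, ← hterm, sum_erase_eq_sub hi]

end SumRule

theorem degree_sum_range_C_mul_X_pow_lt {R : Type*} [Semiring R] (n : ℕ) (a : ℕ → R) :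
    (∑ i ∈ range n, C (a i) * X ^ i).degree < ↑n := by
  simp_rw [← Fin.sum_univ_eq_sum_range]
  exact degree_sum_fin_lt _

noncomputable def lamPoly (n : ℕ) (v : ℕ → ℂ) : ℂ[X] :=
  X ^ (n + 1) + ∑ i ∈ range n, C (v (i + 1)) * X ^ i

theorem lam_eq_eval_lamPoly_add_div (n : ℕ) (v : ℕ → ℂ) (u w : ℂ) :
    lam n v u w = fun p => (lamPoly n v).eval p + u / (p - w) := by
  ext p
  simp [lam, lamPoly, eval_finsetSum]

theorem monic_lamPoly (n : ℕ) (v : ℕ → ℂ) : (lamPoly n v).Monic :=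
  monic_X_pow_add ((degree_sum_range_C_mul_X_pow_lt n _).trans (by exact_mod_cast n.lt_succ_self))

theorem natDegree_lamPoly (n : ℕ) (v : ℕ → ℂ) : (lamPoly n v).natDegree = n + 1 := by
  rw [lamPoly, natDegree_add_eq_left_of_degree_lt, natDegree_X_pow]
  rw [degree_X_pow]
  exact (degree_sum_range_C_mul_X_pow_lt n _).trans (by exact_mod_cast n.lt_succ_self)

theorem residue_sum_identity_h1_general
    (n : ℕ) (v : ℕ → ℂ) (u w : ℂ)
    (r : Fin (n + 2) → ℂ) (hinj : Function.Injective r)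
    (hw : ∀ k, r k ≠ w)
    (hcrit : ∀ k, deriv (lam n v u w) (r k) = 0) :
    ∀ i : Fin (n + 2),
      ∑ k ∈ Finset.univ.erase i,
        (lam n v u w (r k) - lam n v u w (r i)) /
          (iteratedDeriv 2 (lam n v u w) (r k) * (r k - r i) ^ 2)
      = ((1 : ℂ) - (n : ℂ)) / (2 * ((n : ℂ) + 1)) := by
  intro i
  rw [sum_erase_div_iteratedDeriv_two_mul_sq (lam_eq_eval_lamPoly_add_div n v u w)
    (monic_lamPoly n v) (by rw [natDegree_lamPoly]; omega) hinj.injOn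
    (by rw [card_univ, Fintype.card_fin, natDegree_lamPoly]) (fun k _ => hw k)
    (fun k _ => hcrit k) (mem_univ i), natDegree_lamPoly]
  push_cast
  field_simp
  ring

/-- if `λ' = 0` has `n+2` pairwise distinct roots `r₁,…,r_{n+2}`,
none equal to `w`, then for each `i`,
`Σ_{k≠i} (λ(r_k) - λ(r_i))/(λ''(r_k)(r_k - r_i)²) = (1-n)/(2(n+1))`. -/
theorem residue_sum_identity_h1
    (n : ℕ) (v : ℕ → ℂ) (u w : ℂ) (hu : u ≠ 0)
    (r : Fin (n + 2) → ℂ) (hinj : Function.Injective r)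
    (hw : ∀ k, r k ≠ w)
    (hcrit : ∀ k, deriv (lam n v u w) (r k) = 0) :
    ∀ i : Fin (n + 2),
      ∑ k ∈ Finset.univ.erase i,
        (lam n v u w (r k) - lam n v u w (r i)) /
          (iteratedDeriv 2 (lam n v u w) (r k) * (r k - r i) ^ 2)
      = ((1 : ℂ) - (n : ℂ)) / (2 * ((n : ℂ) + 1)) :=
  residue_sum_identity_h1_general n v u w r hinj hw hcrit
end

section
/- With λ, r_k, P^{ki}_a as above, the difference P^{ki}_2 - λ(r_i)·P^{ki}_1 factors as ((λ(r_k)-λ(r_i))/(r_k-r_i)) · [ λ₊''(r_i)/2 + u/((r_i-w)(r_k-w)²) ], where λ₊''(r_i) = λ''(r_i) - 2u/(r_i-w)³. -/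
open Finset

/-- `λ₊(p)`: the polynomial part of `λ`. -/
noncomputable def lamPlus (n : ℕ) (v : ℕ → ℂ) : ℂ → ℂ :=
  fun p => p ^ (n + 1) + ∑ i ∈ Finset.range n, v (i + 1) * p ^ i

/-- `P₁^{ki}` evaluated at a pair of critical points `rk, ri`. -/
noncomputable def Pone (n : ℕ) (v : ℕ → ℂ) (u w rk ri : ℂ) : ℂ :=
  (iteratedDeriv 2 (lam n v u w) rk + iteratedDeriv 2 (lam n v u w) ri) / (2 * (rk - ri))
    - (rk - ri) * (rk + ri - 2 * w) * u / ((rk - w) ^ 3 * (ri - w) ^ 3)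

/-- `P₂^{ki}` evaluated at a pair of critical points `rk, ri`. -/
noncomputable def Ptwo (n : ℕ) (v : ℕ → ℂ) (u w rk ri : ℂ) : ℂ :=
  (iteratedDeriv 2 (lam n v u w) rk * lam n v u w ri
      + lam n v u w rk * iteratedDeriv 2 (lam n v u w) ri) / (2 * (rk - ri))
    - (rk + ri - 2 * w) * (lam n v u w rk * (rk - w) - lam n v u w ri * (ri - w)) * u /
        ((rk - w) ^ 3 * (ri - w) ^ 3)

/-!
The second-derivative terms of `P₂ - λ(r_i) P₁` collapse to
`(λ(r_k) - λ(r_i)) λ''(r_i) / (2 (r_k - r_i))`. In the pole terms,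
`λ(r_i)(r_k - r_i) + λ(r_i)(r_i - w) = λ(r_i)(r_k - w)` leaves the factor `λ(r_k) - λ(r_i)`,
and `(r_i - w)² - (r_k - w)² = (r_i - r_k)(r_k + r_i - 2w)` turns the rest into
`u/((r_i - w)(r_k - w)²) - u/(r_i - w)³`.
-/

theorem Ptwo_sub_mul_Pone_formula {K : Type*} [Field K] [NeZero (2 : K)]
    {rk ri w lk li lk'' li'' u : K}
    (hki : rk ≠ ri) (hkw : rk ≠ w) (hiw : ri ≠ w) :
    (lk'' * li + lk * li'') / (2 * (rk - ri))
        - (rk + ri - 2 * w) * (lk * (rk - w) - li * (ri - w)) * u / ((rk - w) ^ 3 * (ri - w) ^ 3)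
      - li * ((lk'' + li'') / (2 * (rk - ri))
          - (rk - ri) * (rk + ri - 2 * w) * u / ((rk - w) ^ 3 * (ri - w) ^ 3))
      = (lk - li) / (rk - ri) *
          ((li'' - 2 * u / (ri - w) ^ 3) / 2 + u / ((ri - w) * (rk - w) ^ 2)) := by
  have hki' := sub_ne_zero.mpr hki
  have hkw' := sub_ne_zero.mpr hkw
  have hiw' := sub_ne_zero.mpr hiw
  have curvature :
      (lk'' * li + lk * li'') / (2 * (rk - ri)) - li * ((lk'' + li'') / (2 * (rk - ri)))
      = (lk - li) / (rk - ri) * (li'' / 2) := by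
    field_simp
    ring
  have pole : li * (rk - ri) * (rk + ri - 2 * w) * u / ((rk - w) ^ 3 * (ri - w) ^ 3)
        - (rk + ri - 2 * w) * (lk * (rk - w) - li * (ri - w)) * u / ((rk - w) ^ 3 * (ri - w) ^ 3)
      = (lk - li) / (rk - ri) * (u / ((ri - w) * (rk - w) ^ 2) - u / (ri - w) ^ 3) := by
    field_simp
    ring
  have halve : (li'' - 2 * u / (ri - w) ^ 3) / 2 = li'' / 2 - u / (ri - w) ^ 3 := by
    rw [sub_div, mul_div_assoc, mul_div_cancel_left₀ _ two_ne_zero]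
  rw [halve]
  linear_combination curvature + pole

theorem P_difference_factorization_general
    (n : ℕ) (v : ℕ → ℂ) (u w : ℂ)
    (rk ri : ℂ) (hki : rk ≠ ri) (hkw : rk ≠ w) (hiw : ri ≠ w) :
    Ptwo n v u w rk ri - lam n v u w ri * Pone n v u w rk ri
      = ((lam n v u w rk - lam n v u w ri) / (rk - ri)) *
          ((iteratedDeriv 2 (lam n v u w) ri - 2 * u / (ri - w) ^ 3) / 2
            + u / ((ri - w) * (rk - w) ^ 2)) :=
  Ptwo_sub_mul_Pone_formula hki hkw hiw

/-- the difference `P^{ki}₂ - λ(r_i)·P^{ki}₁` factors as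
`((λ(r_k)-λ(r_i))/(r_k-r_i)) · [λ₊''(r_i)/2 + u/((r_i-w)(r_k-w)²)]`, where
`λ₊''(r_i) = λ''(r_i) - 2u/(r_i-w)³`. -/
theorem P_difference_factorization
    (n : ℕ) (v : ℕ → ℂ) (u w : ℂ) (hu : u ≠ 0)
    (rk ri : ℂ) (hki : rk ≠ ri) (hkw : rk ≠ w) (hiw : ri ≠ w)
    (hck : deriv (lam n v u w) rk = 0) (hci : deriv (lam n v u w) ri = 0) :
    Ptwo n v u w rk ri - lam n v u w ri * Pone n v u w rk ri
      = ((lam n v u w rk - lam n v u w ri) / (rk - ri)) *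
          ((iteratedDeriv 2 (lam n v u w) ri - 2 * u / (ri - w) ^ 3) / 2
            + u / ((ri - w) * (rk - w) ^ 2)) :=
  P_difference_factorization_general n v u w rk ri hki hkw hiw
end

section
/- For the variational derivative convention δF/δL := δF/δB + δF/δu + (δF/δw)·(1/u)·(∂ - w) with δF/δB = Σ_{i=1}^n ∂^{-i} δF/δv_i, the variation of any local functional F = ∫ f(v, v_x, …) dx satisfies δF = ∫ res( (δF/δL) δL ) dx, where δL = Σ δv_i ∂^{i-1} + δ[(∂-w)^{-1}u] is the variation of L = ∂^{n+1} + v_n∂^{n-1}+⋯+v₁+(∂-w)^{-1}u. -/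
/-- The constant pseudo-differential operator `1`. -/
def pdoOne {R : Type*} [CommRing R] : ℤ → R := fun m => if m = 0 then 1 else 0

/-- The pseudo-differential operator `x ∂^k`. -/
def pdoSingle {R : Type*} [CommRing R] (k : ℤ) (x : R) : ℤ → R :=
  fun m => if m = k then x else 0

/-- The differential-operator part `P₊` of a pseudo-differential operator. -/
def pdoPlus {R : Type*} [CommRing R] (A : ℤ → R) : ℤ → R :=
  fun m => if 0 ≤ m then A m else 0

/-- The residue of a pseudo-differential operator: the coefficient of `∂^{-1}`. -/
def pdoRes {R : Type*} (A : ℤ → R) : R := A (-1)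

open Finset

lemma genBinom_zero_right (k : ℤ) : genBinom k 0 = 1 := by simp [genBinom]

lemma genBinom_one_right (k : ℤ) : genBinom k 1 = k := by simp [genBinom]

lemma genBinom_natCast_eq_zero_of_lt {k l : ℕ} (h : k < l) : genBinom k l = 0 := by
  rw [genBinom, prod_eq_zero (mem_range.2 h) (by simp), zero_div]

lemma genBinom_mul_genBinom_sub (k : ℤ) {s L : ℕ} (h : s ≤ L) :
    genBinom k s * genBinom (k - s) (L - s) = L.choose s * genBinom k L := by
  have hprod : ∏ i ∈ range L, ((k : ℚ) - i)
      = (∏ i ∈ range s, ((k : ℚ) - i))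
        * ∏ i ∈ range (L - s), (((k - s : ℤ) : ℚ) - i) := by
    rw [← Nat.add_sub_cancel' h, prod_range_add, Nat.add_sub_cancel_left]
    congr 1
    refine prod_congr rfl fun i _ => ?_
    push_cast
    ring
  rw [genBinom, genBinom, genBinom, Nat.cast_choose ℚ h, hprod]
  field_simp

theorem Derivation.iterate_map_mul {R A : Type*} [CommSemiring R] [CommSemiring A] [Algebra R A]
    (D : Derivation R A A) (n : ℕ) (a b : A) :
    D^[n] (a * b) = ∑ ij ∈ antidiagonal n, n.choose ij.1 • (D^[ij.1] a * D^[ij.2] b) := by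
  induction n with
  | zero => simp
  | succ n ih =>
    rw [sum_antidiagonal_choose_succ_nsmul (fun i j => D^[i] a * D^[j] b) n]
    simp only [Function.iterate_succ_apply', ih, map_sum, map_nsmul, Derivation.leibniz,
      smul_eq_mul, smul_add, sum_add_distrib]
    congr 1
    refine sum_congr rfl fun ij hij => ?_
    rw [n.choose_symm_of_eq_add (mem_antidiagonal.1 hij).symm, mul_comm]

theorem Derivation.iterate_map_mul' {R A : Type*} [CommSemiring R] [CommSemiring A] [Algebra R A]
    (D : Derivation R A A) (n : ℕ) (a b : A) :
    D^[n] (a * b) = ∑ i ∈ range (n + 1), n.choose i • (D^[i] a * D^[n - i] b) := by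
  rw [D.iterate_map_mul n a b]
  exact Nat.sum_antidiagonal_eq_sum_range_succ (fun i j ↦ n.choose i • (D^[i] a * D^[j] b)) n

def HasOrderLT {R : Type*} [Zero R] (A : ℤ → R) (N : ℤ) : Prop := ∀ m, N ≤ m → A m = 0

section Order
variable {R : Type*} {A B : ℤ → R} {N N' : ℤ}

lemma HasOrderLT.mono [Zero R] (hA : HasOrderLT A N) (h : N ≤ N') : HasOrderLT A N' :=
  fun m hm => hA m (h.trans hm)

lemma HasOrderLT.add [AddZeroClass R] (hA : HasOrderLT A N) (hB : HasOrderLT B N) :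
    HasOrderLT (A + B) N := fun m hm => by simp [hA m hm, hB m hm]

lemma hasOrderLT_sum [AddCommMonoid R] {ι : Type*} {s : Finset ι} {F : ι → ℤ → R}
    (hF : ∀ i ∈ s, HasOrderLT (F i) N) : HasOrderLT (∑ i ∈ s, F i) N := fun m hm => by
  rw [Finset.sum_apply]
  exact sum_eq_zero fun i hi => hF i hi m hm

lemma hasOrderLT_pdoSingle [CommRing R] {a : ℤ} (x : R) (h : a < N) :
    HasOrderLT (pdoSingle a x) N := fun m hm => if_neg (by omega)

end Order

section PseudoDifferential
variable {R : Type*} [CommRing R] [Algebra ℚ R] (d : Derivation ℚ R R)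
  {A A₁ A₂ B B₁ B₂ C : ℤ → R} {N NA NB : ℤ}

lemma pdoMul_apply_eq_sum (hA : HasOrderLT A NA)
    (hB : HasOrderLT B NB) (m : ℤ) :
    pdoMul d A B m = ∑ k ∈ Ioo (m - NB) NA, ∑ l ∈ range (NB - m + k).toNat,
      genBinom k l • (A k * d^[l] (B (m - k + l))) := by
  have term_eq_zero : ∀ (k : ℤ) (l : ℕ), NB ≤ m - k + l →
      genBinom k l • (A k * d^[l] (B (m - k + l))) = 0 := fun k l h => by
    rw [hB _ h, iterate_map_zero, mul_zero, smul_zero]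
  rw [pdoMul, finsum_eq_sum_of_support_subset _ (s := Ioo (m - NB) NA)]
  · refine sum_congr rfl fun k _ => finsum_eq_sum_of_support_subset _ fun l hl => ?_
    by_contra hlk
    simp only [coe_range, Set.mem_Iio, Int.lt_toNat, not_lt] at hlk
    exact hl (term_eq_zero k l (by omega))
  · intro k hk
    by_contra hmem
    refine hk (finsum_eq_zero_of_forall_eq_zero fun l => ?_)
    simp only [coe_Ioo, Set.mem_Ioo, not_and_or, not_lt] at hmem
    rcases le_or_gt NA k with h | h
    · rw [hA k h, zero_mul, smul_zero]
    · exact term_eq_zero k l (by omega)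

lemma HasOrderLT.pdoMul (hA : HasOrderLT A NA)
    (hB : HasOrderLT B NB) : HasOrderLT (pdoMul d A B) (NA + NB - 1) := fun m hm => by
  rw [pdoMul_apply_eq_sum d hA hB]
  refine sum_eq_zero fun k hk => sum_eq_zero fun l _ => ?_
  rw [mem_Ioo] at hk
  rw [hB (m - k + l) (by omega), iterate_map_zero, mul_zero, smul_zero]

lemma hasOrderLT_mul_pdoSingle_zero (hA : HasOrderLT A N) (p : R) :
    HasOrderLT (pdoMul d A (pdoSingle 0 p)) N := by
  simpa using hA.pdoMul d (hasOrderLT_pdoSingle p zero_lt_one)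

lemma pdoMul_zero_left (B : ℤ → R) : pdoMul d 0 B = 0 := by
  funext m
  simp [pdoMul]

lemma pdoMul_zero_right (A : ℤ → R) : pdoMul d A 0 = 0 := by
  funext m
  simp [pdoMul, iterate_map_zero]

lemma pdoMul_add_left (hA₁ : HasOrderLT A₁ NA) (hA₂ : HasOrderLT A₂ NA)
    (hB : HasOrderLT B NB) : pdoMul d (A₁ + A₂) B = pdoMul d A₁ B + pdoMul d A₂ B := by
  funext m
  simp only [Pi.add_apply, pdoMul_apply_eq_sum d hA₁ hB, pdoMul_apply_eq_sum d hA₂ hB,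
    pdoMul_apply_eq_sum d (hA₁.add hA₂) hB, add_mul, smul_add, sum_add_distrib]

lemma pdoMul_add_right (hA : HasOrderLT A NA) (hB₁ : HasOrderLT B₁ NB)
    (hB₂ : HasOrderLT B₂ NB) :
    pdoMul d A (B₁ + B₂) = pdoMul d A B₁ + pdoMul d A B₂ := by
  funext m
  simp only [Pi.add_apply, pdoMul_apply_eq_sum d hA hB₁, pdoMul_apply_eq_sum d hA hB₂,
    pdoMul_apply_eq_sum d hA (hB₁.add hB₂), iterate_map_add, mul_add, smul_add, sum_add_distrib]

lemma pdoMul_sum_left {ι : Type*} {s : Finset ι} {F : ι → ℤ → R}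
    (hF : ∀ i ∈ s, HasOrderLT (F i) NA) (hB : HasOrderLT B NB) :
    pdoMul d (∑ i ∈ s, F i) B = ∑ i ∈ s, pdoMul d (F i) B := by
  classical
  induction s using Finset.induction_on with
  | empty => simp [pdoMul_zero_left]
  | insert a s ha ih =>
    have hs : ∀ i ∈ s, HasOrderLT (F i) NA := fun i hi => hF i (mem_insert_of_mem hi)
    rw [sum_insert ha, sum_insert ha,
      pdoMul_add_left d (hF a (mem_insert_self a s)) (hasOrderLT_sum hs) hB, ih hs]

lemma pdoMul_sum_right {ι : Type*} {s : Finset ι} {G : ι → ℤ → R}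
    (hA : HasOrderLT A NA) (hG : ∀ i ∈ s, HasOrderLT (G i) NB) :
    pdoMul d A (∑ i ∈ s, G i) = ∑ i ∈ s, pdoMul d A (G i) := by
  classical
  induction s using Finset.induction_on with
  | empty => simp [pdoMul_zero_right]
  | insert a s ha ih =>
    have hs : ∀ i ∈ s, HasOrderLT (G i) NB := fun i hi => hG i (mem_insert_of_mem hi)
    rw [sum_insert ha, sum_insert ha,
      pdoMul_add_right d hA (hG a (mem_insert_self a s)) (hasOrderLT_sum hs), ih hs]

lemma pdoMul_pdoSingle_natCast_left_apply (k : ℕ) (x : R) (C : ℤ → R) (m : ℤ) :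
    pdoMul d (pdoSingle k x) C m
      = ∑ l ∈ range (k + 1), genBinom k l • (x * d^[l] (C (m - k + l))) := by
  rw [pdoMul, finsum_eq_single _ (k : ℤ) fun j hj => by simp [pdoSingle, hj]]
  simp only [pdoSingle, if_true]
  refine finsum_eq_sum_of_support_subset _ fun l hl => ?_
  by_contra hlk
  simp only [coe_range, Set.mem_Iio, not_lt] at hlk
  exact hl (by dsimp only; rw [genBinom_natCast_eq_zero_of_lt (by omega), zero_smul])

lemma pdoMul_pdoSingle_zero_left (x : R) (C : ℤ → R) :
    pdoMul d (pdoSingle 0 x) C = fun m => x * C m := by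
  funext m
  simpa [genBinom_zero_right] using pdoMul_pdoSingle_natCast_left_apply d 0 x C m

lemma pdoMul_firstOrder_apply (hC : HasOrderLT C N) (a b : R) (m : ℤ) :
    pdoMul d (pdoSingle 1 a + pdoSingle 0 b) C m = a * C (m - 1) + a * d (C m) + b * C m := by
  rw [pdoMul_add_left d (hasOrderLT_pdoSingle a one_lt_two) (hasOrderLT_pdoSingle b two_pos) hC,
    Pi.add_apply, pdoMul_pdoSingle_zero_left, ← Nat.cast_one,
    pdoMul_pdoSingle_natCast_left_apply]
  simp [sum_range_succ, genBinom_zero_right, genBinom_one_right]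

lemma pdoMul_apply_add {a c : ℤ} (hA : HasOrderLT A (a + 1))
    (hC : HasOrderLT C (c + 1)) : pdoMul d A C (a + c) = A a * C c := by
  rw [pdoMul_apply_eq_sum d hA hC, show Ioo (a + c - (c + 1)) (a + 1) = {a} by ext; simp; omega,
    sum_singleton, show (c + 1 - (a + c) + a).toNat = 1 by omega, sum_range_one]
  simp [genBinom_zero_right]

lemma pdoMul_pdoSingle_zero_right_apply {a : ℤ} (hA : HasOrderLT A (a + 1))
    (y : R) : pdoMul d A (pdoSingle 0 y) a = A a * y := by
  have h := pdoMul_apply_add d (c := 0) hA (hasOrderLT_pdoSingle (a := 0) y (by norm_num))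
  rwa [add_zero, pdoSingle, if_pos rfl] at h

lemma pdoMul_pdoSingle_zero_right_apply_neg_two (hA : HasOrderLT A 0) (y : R) :
    pdoMul d A (pdoSingle 0 y) (-2) = A (-2) * y - A (-1) * d y := by
  rw [pdoMul_apply_eq_sum d hA (hasOrderLT_pdoSingle y zero_lt_one),
    show Ioo (-2 - 1 : ℤ) 0 = {-2, -1} by decide, sum_pair (by decide)]
  simp [sum_range_succ, pdoSingle, genBinom_zero_right, genBinom_one_right]
  ring

lemma pdoMul_pdoSingle_pdoSingle_apply_sub (a b : ℤ) (x y : R) (s : ℕ) :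
    pdoMul d (pdoSingle a x) (pdoSingle b y) (a + b - s) = genBinom a s • (x * d^[s] y) := by
  rw [pdoMul, finsum_eq_single _ a fun k hk => by simp [pdoSingle, hk],
    finsum_eq_single _ s fun l hl => by
      have : a + b - s - a + l ≠ b := by omega
      simp [pdoSingle, this]]
  simp [pdoSingle, show a + b - s - a + s = b by ring]

lemma pdoRes_mul_pdoSingle (i L : ℕ) (hA : HasOrderLT A (1 - i)) (y : R) :
    pdoRes (pdoMul d A (pdoSingle (i + L - 1) y))
      = ∑ t ∈ range (L + 1), genBinom (-i - t) (L - t) • (A (-i - t) * d^[L - t] y) := by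
  rw [pdoRes, pdoMul_apply_eq_sum d hA (hasOrderLT_pdoSingle y (lt_add_one _))]
  refine sum_nbij' (fun k => (-i - k).toNat) (fun t => -i - t) ?_ ?_ ?_ ?_ fun k hk => ?_
  · intro k hk
    simp only [mem_Ioo, mem_range] at hk ⊢
    omega
  · intro t ht
    simp only [mem_Ioo, mem_range] at ht ⊢
    omega
  · intro k hk
    simp only [mem_Ioo] at hk
    omega
  · intro t _
    omega
  · simp only [mem_Ioo] at hk
    obtain ⟨t, rfl⟩ : ∃ t : ℕ, k = -i - t := ⟨(-i - k).toNat, by omega⟩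
    rw [sum_eq_single_of_mem (L - t) (by simp only [mem_range]; omega) fun l _ hl => by
      simp only [pdoSingle, if_neg (show -1 - (-(i : ℤ) - t) + l ≠ i + L - 1 by omega),
        iterate_map_zero, mul_zero, smul_zero]]
    simp only [pdoSingle, show -(i : ℤ) - (-i - t) = t by ring, Int.toNat_natCast,
      show -1 - (-(i : ℤ) - t) + ((L - t : ℕ) : ℤ) = i + L - 1 by omega, if_true]

lemma hasOrderLT_negPow_mul (i : ℕ) (x : R) :
    HasOrderLT (pdoMul d (pdoSingle (-i) 1) (pdoSingle 0 x)) (1 - i) := by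
  simpa [sub_eq_neg_add] using
    (hasOrderLT_pdoSingle (1 : R) (lt_add_one (-(i : ℤ)))).pdoMul d
      (hasOrderLT_pdoSingle x zero_lt_one)

-- `C(-i-t, L-t) C(-i, t) = C(L, t) C(-i, L)` turns the residue into Leibniz' rule
-- for `d^L (x y)`.
lemma pdoRes_negPow_mul_pow (i L : ℕ) (x y : R) :
    pdoRes (pdoMul d (pdoMul d (pdoSingle (-i) 1) (pdoSingle 0 x)) (pdoSingle (i + L - 1) y))
      = genBinom (-i) L • d^[L] (x * y) := by
  rw [pdoRes_mul_pdoSingle d i L (hasOrderLT_negPow_mul d i x), d.iterate_map_mul', smul_sum]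
  refine sum_congr rfl fun t ht => ?_
  have hcoeff := genBinom_mul_genBinom_sub (-i) (mem_range_succ_iff.1 ht)
  rw [show (-i - t : ℤ) = -i + 0 - t by ring, pdoMul_pdoSingle_pdoSingle_apply_sub, one_mul,
    add_zero, smul_mul_assoc, smul_smul, ← Nat.cast_smul_eq_nsmul ℚ, smul_smul, mul_comm,
    hcoeff, mul_comm]

lemma pdoRes_negPow_mul_pow_sub_mem_range (i j : ℕ) (x y : R) :
    pdoRes (pdoMul d (pdoMul d (pdoSingle (-i) 1) (pdoSingle 0 x)) (pdoSingle (j - 1) y))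
      - (if i = j then x * y else 0) ∈ LinearMap.range (d : R →ₗ[ℚ] R) := by
  rcases lt_or_ge j i with hji | hij
  · rw [pdoRes, ((hasOrderLT_negPow_mul d i x).pdoMul d (hasOrderLT_pdoSingle y (lt_add_one _)))
      (-1) (by omega), if_neg (by omega), sub_zero]
    exact zero_mem _
  obtain ⟨L, rfl⟩ := Nat.exists_eq_add_of_le hij
  rw [show ((i + L : ℕ) : ℤ) - 1 = i + L - 1 by push_cast; ring, pdoRes_negPow_mul_pow]
  cases L with
  | zero => simp [genBinom_zero_right]
  | succ L =>
    rw [if_neg (by omega), sub_zero, Function.iterate_succ_apply', ← d.map_smul]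
    exact LinearMap.mem_range_self _ _

lemma pdoRes_sum_negPow_mul_sum_pow_sub_mem_range (n : ℕ) (x y : ℕ → R) :
    pdoRes (pdoMul d (∑ i ∈ Icc 1 n, pdoMul d (pdoSingle (-i) 1) (pdoSingle 0 (x i)))
        (∑ j ∈ Icc 1 n, pdoSingle (j - 1) (y j)))
      - ∑ i ∈ Icc 1 n, x i * y i ∈ LinearMap.range (d : R →ₗ[ℚ] R) := by
  have hY : ∀ j ∈ Icc 1 n, HasOrderLT (pdoSingle ((j : ℤ) - 1) (y j)) n := fun j hj =>
    hasOrderLT_pdoSingle _ (by simp only [mem_Icc] at hj; omega)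
  have hX : ∀ i ∈ Icc 1 n, HasOrderLT (pdoMul d (pdoSingle (-i) 1) (pdoSingle 0 (x i))) 0 :=
    fun i hi => (hasOrderLT_negPow_mul d i (x i)).mono (by simp only [mem_Icc] at hi; omega)
  rw [pdoMul_sum_left d hX (hasOrderLT_sum hY)]
  simp_rw [pdoMul_sum_right d (hasOrderLT_negPow_mul d _ _) hY]
  have hdiag : ∑ i ∈ Icc 1 n, x i * y i
      = ∑ i ∈ Icc 1 n, ∑ j ∈ Icc 1 n, if i = j then x i * y j else 0 := by
    refine sum_congr rfl fun i hi => ?_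
    rw [sum_ite_eq, if_pos hi]
  rw [hdiag, pdoRes, Finset.sum_apply, ← sum_sub_distrib]
  refine Submodule.sum_mem _ fun i _ => ?_
  rw [Finset.sum_apply, ← sum_sub_distrib]
  exact Submodule.sum_mem _ fun j _ => pdoRes_negPow_mul_pow_sub_mem_range d i j (x i) (y j)

lemma pdoRes_mul_add_of_hasOrderLT_zero (hA : HasOrderLT A 0)
    (hB : HasOrderLT B N) (hC : HasOrderLT C 0) :
    pdoRes (pdoMul d A (B + C)) = pdoRes (pdoMul d A B) := by
  rw [pdoMul_add_right d hA (hB.mono (le_max_left N 0)) (hC.mono (le_max_right N 0)), pdoRes,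
    Pi.add_apply, (hA.pdoMul d hC) (-1) (by norm_num), add_zero, pdoRes]

lemma pdoMul_pdoSingle_zero_firstOrder (c a b : R) :
    pdoMul d (pdoSingle 0 c) (pdoSingle 1 a + pdoSingle 0 b)
      = pdoSingle 1 (c * a) + pdoSingle 0 (c * b) := by
  rw [pdoMul_pdoSingle_zero_left]
  funext m
  simp only [Pi.add_apply, pdoSingle]
  split_ifs <;> simp_all

lemma pdoRes_add_pdoSingle_add_firstOrder_mul {Y : ℤ → R} (hA : HasOrderLT A NA)
    (hY : HasOrderLT Y NB) (e c w : R) :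
    pdoRes (pdoMul d (A + pdoSingle 0 e
        + pdoMul d (pdoSingle 0 c) (pdoSingle 1 1 + pdoSingle 0 (-w))) Y)
      = pdoRes (pdoMul d A Y) + e * Y (-1) + c * (Y (-2) + d (Y (-1)) - w * Y (-1)) := by
  set N := max NA 2
  have hA' : HasOrderLT A N := hA.mono (le_max_left _ _)
  have h0 : (0 : ℤ) < N := zero_lt_two.trans_le (le_max_right _ _)
  have hE : HasOrderLT (pdoSingle 0 e) N := hasOrderLT_pdoSingle e h0
  have hFirst : HasOrderLT (pdoSingle 1 c + pdoSingle 0 (c * -w)) N :=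
    (hasOrderLT_pdoSingle c (one_lt_two.trans_le (le_max_right _ _))).add
      (hasOrderLT_pdoSingle _ h0)
  rw [pdoMul_pdoSingle_zero_firstOrder, mul_one, pdoMul_add_left d (hA'.add hE) hFirst hY,
    pdoMul_add_left d hA' hE hY, pdoRes, Pi.add_apply, Pi.add_apply, pdoMul_pdoSingle_zero_left,
    pdoMul_firstOrder_apply d hY, pdoRes]
  ring_nf

variable {w : R}

lemma rightInv_apply_neg_one (hB : HasOrderLT B 0)
    (hBinv : pdoMul d (pdoSingle 1 1 + pdoSingle 0 (-w)) B = pdoOne) : B (-1) = 1 := by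
  have h := congrFun hBinv 0
  rw [pdoMul_firstOrder_apply d hB] at h
  simpa [pdoOne, hB 0 le_rfl] using h

lemma rightInv_apply_neg_two (hB : HasOrderLT B 0)
    (hBinv : pdoMul d (pdoSingle 1 1 + pdoSingle 0 (-w)) B = pdoOne) : B (-2) = w := by
  have h := congrFun hBinv (-1)
  rw [pdoMul_firstOrder_apply d hB, rightInv_apply_neg_one d hB hBinv] at h
  norm_num [pdoOne] at h
  linear_combination h

lemma rightInv_mul_apply_neg_one (hB : HasOrderLT B 0)
    (hBinv : pdoMul d (pdoSingle 1 1 + pdoSingle 0 (-w)) B = pdoOne) (p : R) :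
    pdoMul d B (pdoSingle 0 p) (-1) = p := by
  rw [pdoMul_pdoSingle_zero_right_apply d (by simpa using hB), rightInv_apply_neg_one d hB hBinv,
    one_mul]

lemma rightInv_mul_apply_neg_two (hB : HasOrderLT B 0)
    (hBinv : pdoMul d (pdoSingle 1 1 + pdoSingle 0 (-w)) B = pdoOne) (p : R) :
    pdoMul d B (pdoSingle 0 p) (-2) = w * p - d p := by
  rw [pdoMul_pdoSingle_zero_right_apply_neg_two d hB, rightInv_apply_neg_two d hB hBinv,
    rightInv_apply_neg_one d hB hBinv, one_mul]

lemma rightInv_mul_mul_rightInv_mul_apply_neg_two (hB : HasOrderLT B 0)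
    (hBinv : pdoMul d (pdoSingle 1 1 + pdoSingle 0 (-w)) B = pdoOne) (p q : R) :
    pdoMul d (pdoMul d (pdoMul d B (pdoSingle 0 p)) B) (pdoSingle 0 q) (-2) = p * q := by
  have hBp := hasOrderLT_mul_pdoSingle_zero d hB p
  have hBpB : pdoMul d (pdoMul d B (pdoSingle 0 p)) B (-1 + -1) = p := by
    rw [pdoMul_apply_add d (by simpa using hBp) (by simpa using hB),
      rightInv_mul_apply_neg_one d hB hBinv, rightInv_apply_neg_one d hB hBinv, mul_one]
  rw [pdoMul_pdoSingle_zero_right_apply d (by simpa using hBp.pdoMul d hB),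
    show (-2 : ℤ) = -1 + -1 by norm_num, hBpB]

end PseudoDifferential

theorem variation_as_residue_pairing_general
    {R : Type*} [CommRing R] [Algebra ℚ R]
    (d δ : Derivation ℚ R R)
    (n : ℕ) (v : ℕ → R) (w u uinv : R) (hu : u * uinv = 1)
    (f : R) (Ev : ℕ → R) (Eu Ew : R)
    (hvar : δ f - ((∑ i ∈ Finset.Icc 1 n, Ev i * δ (v i)) + Eu * δ u + Ew * δ w)
      ∈ Set.range (⇑d))
    (B : ℤ → R)
    (hBneg : ∀ m : ℤ, 0 ≤ m → B m = 0)
    (hBinv : pdoMul (⇑d) (pdoSingle 1 (1 : R) + pdoSingle 0 (-w)) B = pdoOne) :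
    δ f - pdoRes (pdoMul (⇑d)
        ((∑ i ∈ Finset.Icc 1 n, pdoMul (⇑d) (pdoSingle (-(i : ℤ)) (1 : R))
            (pdoSingle 0 (Ev i)))
          + pdoSingle 0 Eu
          + pdoMul (⇑d) (pdoSingle 0 (Ew * uinv))
              (pdoSingle 1 (1 : R) + pdoSingle 0 (-w)))
        ((∑ i ∈ Finset.Icc 1 n, pdoSingle ((i : ℤ) - 1) (δ (v i)))
          + pdoMul (⇑d) B (pdoSingle 0 (δ u))
          + pdoMul (⇑d) (pdoMul (⇑d) (pdoMul (⇑d) B (pdoSingle 0 (δ w))) B)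
              (pdoSingle 0 u)))
      ∈ Set.range (⇑d) := by
  have hX₁ :
      HasOrderLT (∑ i ∈ Icc 1 n, pdoMul d (pdoSingle (-(i : ℤ)) 1) (pdoSingle 0 (Ev i))) 0 :=
    hasOrderLT_sum fun i hi => (hasOrderLT_negPow_mul d i (Ev i)).mono (by simp at hi; omega)
  have hY₁ : HasOrderLT (∑ i ∈ Icc 1 n, pdoSingle ((i : ℤ) - 1) (δ (v i))) n :=
    hasOrderLT_sum fun i hi => hasOrderLT_pdoSingle _ (by simp at hi; omega)
  have hY₁neg : ∀ m < 0, (∑ i ∈ Icc 1 n, pdoSingle ((i : ℤ) - 1) (δ (v i))) m = 0 :=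
    fun m hm => by
      rw [Finset.sum_apply]
      exact sum_eq_zero fun i hi => if_neg (by simp at hi; omega)
  have hY₂ := hasOrderLT_mul_pdoSingle_zero d hBneg (δ u)
  have hY₃ : HasOrderLT _ (-1) := hasOrderLT_mul_pdoSingle_zero d
    ((hasOrderLT_mul_pdoSingle_zero d hBneg (δ w)).pdoMul d hBneg) u
  rw [pdoRes_add_pdoSingle_add_firstOrder_mul d hX₁ ((hY₁.add (hY₂.mono n.cast_nonneg)).add
      (hY₃.mono (by omega))), add_assoc _ (pdoMul d B _),
    pdoRes_mul_add_of_hasOrderLT_zero d hX₁ hY₁ (hY₂.add (hY₃.mono (by norm_num)))]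
  simp only [Pi.add_apply, hY₁neg (-1) (by norm_num), hY₁neg (-2) (by norm_num),
    rightInv_mul_apply_neg_one d hBneg hBinv, rightInv_mul_apply_neg_two d hBneg hBinv,
    rightInv_mul_mul_rightInv_mul_apply_neg_two d hBneg hBinv, hY₃ (-1) le_rfl, zero_add,
    add_zero]
  have hrange : Set.range d = (LinearMap.range (d : R →ₗ[ℚ] R) : Set R) :=
    (LinearMap.coe_range _).symm
  rw [hrange, SetLike.mem_coe] at hvar ⊢
  convert sub_mem hvar (pdoRes_sum_negPow_mul_sum_pow_sub_mem_range d n Ev (fun i => δ (v i)))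
    using 1
  linear_combination (-(Ew * δ w)) * hu

/-- for the variational derivative convention
`δF/δL := δF/δB + δF/δu + (δF/δw)(1/u)(∂-w)`, `δF/δB = Σ_{i=1}^n ∂^{-i} δF/δv_i`,
the variation of any local functional `F = ∫ f dx` satisfies
`δF = ∫ res((δF/δL) δL) dx`, where
`δL = Σ δv_i ∂^{i-1} + (∂-w)^{-1} δu + (∂-w)^{-1} δw (∂-w)^{-1} u`
and equalities of local functionals hold up to total `x`-derivatives.
Here `d` is the spatial derivative, `δ` is the variation (a second commuting
derivation), `B = (∂-w)^{-1}`, and `Ev i, Eu, Ew` are the variational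
derivatives of `F` with respect to `v_i, u, w`, characterized by
`δf ≡ Σ Ev_i δv_i + Eu δu + Ew δw` modulo `im d`. -/
theorem variation_as_residue_pairing
    {R : Type*} [CommRing R] [Algebra ℚ R]
    (d δ : Derivation ℚ R R) (hcomm : ∀ x : R, d (δ x) = δ (d x))
    (n : ℕ) (v : ℕ → R) (w u uinv : R) (hu : u * uinv = 1)
    (f : R) (Ev : ℕ → R) (Eu Ew : R)
    (hvar : δ f - ((∑ i ∈ Finset.Icc 1 n, Ev i * δ (v i)) + Eu * δ u + Ew * δ w)
      ∈ Set.range (⇑d))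
    (B : ℤ → R)
    (hBneg : ∀ m : ℤ, 0 ≤ m → B m = 0)
    (hBinv : pdoMul (⇑d) (pdoSingle 1 (1 : R) + pdoSingle 0 (-w)) B = pdoOne) :
    δ f - pdoRes (pdoMul (⇑d)
        ((∑ i ∈ Finset.Icc 1 n, pdoMul (⇑d) (pdoSingle (-(i : ℤ)) (1 : R))
            (pdoSingle 0 (Ev i)))
          + pdoSingle 0 Eu
          + pdoMul (⇑d) (pdoSingle 0 (Ew * uinv))
              (pdoSingle 1 (1 : R) + pdoSingle 0 (-w)))
        ((∑ i ∈ Finset.Icc 1 n, pdoSingle ((i : ℤ) - 1) (δ (v i)))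
          + pdoMul (⇑d) B (pdoSingle 0 (δ u))
          + pdoMul (⇑d) (pdoMul (⇑d) (pdoMul (⇑d) B (pdoSingle 0 (δ w))) B)
              (pdoSingle 0 u)))
      ∈ Set.range (⇑d) :=
  variation_as_residue_pairing_general d δ n v w u uinv hu f Ev Eu Ew hvar B hBneg hBinv
end
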